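/- Let (x,y) be a gluing pair, i.e., x = 1 1 0 u 0 v and y = 1 0 1 u 0 v for Dyck words u, v. If x, viewed as a rooted tree, has a centroid in its right subtree v, then this vertex is also a centroid of y and φ(y) = φ(x) − 1. Symmetrically, if y has a centroid in its left subtree u, then this vertex is also a centroid of x and φ(y) = φ(x) + 1. -/

import Mathlib

/-!
Match the vertices of `x` and `y` other than the moved leaf: the roots, the parent `a` of the leaf
in `x` with the root `b` of `u` in `y`, and the subtrees `u` and `v`. Away from the leaf this
matching is an isometry, so the potential of a vertex changes only through its distance to the
leaf: it grows by one on the side of `u` (including `a ↦ b`) and drops by one on the side of `v`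
(including the root). A leaf never has smaller potential than its neighbour, so `φ(x)` and `φ(y)`
differ by at most one, and a centroid of `x` in `v` (of `y` in `u`) is carried to a vertex at which
this bound is attained.
-/

/-- Rooted (ordered) plane trees: a root with a list of child subtrees. -/
inductive RTree where
  | node : List RTree → RTree

namespace RTree

mutual
/-- Number of edges of a rooted tree. -/
def edges : RTree → ℕ
  | .node cs => edgesF cs
/-- Number of edges of a forest, counting also the edges to the roots. -/
def edgesF : List RTree → ℕ
  | [] => 0
  | c :: cs => edges c + 1 + edgesF cs
end

/-- Tree rotation `ρ(1 u 0 v) = u 1 v 0`: the leftmost child of the root becomes the new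
root, and the old root (with its remaining children) is appended as its last child. -/
def rho : RTree → RTree
  | .node [] => .node []
  | .node (.node cs :: rest) => .node (cs ++ [.node rest])

mutual
/-- The list of vertices of a rooted tree, encoded as addresses (paths of child indices). -/
def addrs : RTree → List (List ℕ)
  | .node cs => [] :: addrsF 0 cs
def addrsF : ℕ → List RTree → List (List ℕ)
  | _, [] => []
  | i, c :: cs => (addrs c).map (i :: ·) ++ addrsF (i + 1) cs
end

/-- Length of the longest common prefix of two addresses. -/
def lcp : List ℕ → List ℕ → ℕ
  | a :: p, b :: q => if a = b then 1 + lcp p q else 0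
  | _, _ => 0

/-- Graph distance between two vertices, given by their addresses. -/
def adist (p q : List ℕ) : ℕ := p.length + q.length - 2 * lcp p q

/-- The potential of the vertex `p`: the sum of distances to all vertices of `t`. -/
def potential (t : RTree) (p : List ℕ) : ℕ := ((addrs t).map (adist p)).sum

/-- The potential `φ(t)` of the tree: the minimum vertex potential. -/
noncomputable def phiMin (t : RTree) : ℕ := sInf {m | ∃ p ∈ addrs t, potential t p = m}

/-- A centroid: a vertex of minimum potential. -/
def IsCentroid (t : RTree) (p : List ℕ) : Prop :=
  p ∈ addrs t ∧ potential t p = phiMin t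

/-- `λ(t)`: the rotation period of the rooted tree `t`, i.e. the number of distinct rooted
trees obtained from `t` by repeated rotation. -/
noncomputable def lam (t : RTree) : ℕ := sInf {i | 0 < i ∧ rho^[i] t = t}

end RTree

namespace RTree

@[simp]
lemma lcp_nil_left (p : List ℕ) : lcp [] p = 0 := by
  cases p <;> rfl

@[simp]
lemma lcp_nil_right (p : List ℕ) : lcp p [] = 0 := by
  cases p <;> rfl

@[simp]
lemma adist_nil_left (p : List ℕ) : adist [] p = p.length := by
  simp [adist]

@[simp]
lemma adist_nil_right (p : List ℕ) : adist p [] = p.length := by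
  simp [adist]

@[simp]
lemma adist_cons_cons (a b : ℕ) (p q : List ℕ) :
    adist (a :: p) (b :: q) = if a = b then adist p q else p.length + q.length + 2 := by
  simp only [adist, lcp, List.length_cons]
  split_ifs <;> omega

section Potential

lemma phiMin_le {t : RTree} {p : List ℕ} (h : p ∈ addrs t) : phiMin t ≤ potential t p :=
  Nat.sInf_le ⟨p, h, rfl⟩

lemma exists_potential_eq_phiMin (t : RTree) : ∃ p ∈ addrs t, potential t p = phiMin t := by
  have hne : {m | ∃ p ∈ addrs t, potential t p = m}.Nonempty := by
    obtain ⟨cs⟩ := t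
    exact ⟨_, [], List.mem_cons_self, rfl⟩
  exact Nat.sInf_mem hne

lemma phiMin_le_phiMin_add {t t' : RTree} {c : ℕ}
    (h : ∀ q ∈ addrs t', ∃ p ∈ addrs t, potential t p ≤ potential t' q + c) :
    phiMin t ≤ phiMin t' + c := by
  obtain ⟨q, hq, hq_min⟩ := exists_potential_eq_phiMin t'
  obtain ⟨p, hp, hpq⟩ := h q hq
  exact hq_min ▸ (phiMin_le hp).trans hpq

end Potential

section Forest

variable {cs : List RTree}

lemma exists_eq_cons_of_mem_addrsF {i : ℕ} {p : List ℕ} (h : p ∈ addrsF i cs) :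
    ∃ k r, i ≤ k ∧ p = k :: r := by
  induction cs generalizing i with
  | nil => simp [addrsF] at h
  | cons c cs ih =>
    simp only [addrsF, List.mem_append, List.mem_map] at h
    rcases h with ⟨r, -, rfl⟩ | h
    · exact ⟨i, r, le_rfl, rfl⟩
    · obtain ⟨k, r, hk, rfl⟩ := ih h
      exact ⟨k, r, by omega, rfl⟩

lemma cons_succ_mem_addrsF_succ_iff {i k : ℕ} {r : List ℕ} :
    (k + 1) :: r ∈ addrsF (i + 1) cs ↔ k :: r ∈ addrsF i cs := by
  induction cs generalizing i with
  | nil => simp [addrsF]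
  | cons c cs ih => simp [addrsF, ih]

lemma cons_add_mem_addrsF_add_iff {i k n : ℕ} {r : List ℕ} :
    (k + n) :: r ∈ addrsF (i + n) cs ↔ k :: r ∈ addrsF i cs := by
  induction n with
  | zero => rfl
  | succ n ih => exact cons_succ_mem_addrsF_succ_iff.trans ih

lemma mem_addrsF_iff {i : ℕ} {p : List ℕ} :
    p ∈ addrsF i cs ↔ ∃ k r, k :: r ∈ addrsF 0 cs ∧ p = (k + i) :: r := by
  have shift (k : ℕ) (r : List ℕ) : (k + i) :: r ∈ addrsF i cs ↔ k :: r ∈ addrsF 0 cs := by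
    simpa only [zero_add] using cons_add_mem_addrsF_add_iff (i := 0) (k := k) (n := i) (r := r)
  constructor
  · intro h
    obtain ⟨k, r, hik, rfl⟩ := exists_eq_cons_of_mem_addrsF h
    obtain ⟨k, rfl⟩ := Nat.exists_eq_add_of_le' hik
    exact ⟨k, r, (shift k r).mp h, rfl⟩
  · rintro ⟨k, r, h, rfl⟩
    exact (shift k r).mpr h

lemma sum_map_addrsF_succ {i : ℕ} {f g : List ℕ → ℕ}
    (h : ∀ k r, i ≤ k → f ((k + 1) :: r) = g (k :: r)) :
    ((addrsF (i + 1) cs).map f).sum = ((addrsF i cs).map g).sum := by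
  induction cs generalizing i with
  | nil => rfl
  | cons c cs ih =>
    simp only [addrsF, List.map_append, List.sum_append, List.map_map]
    congr 1
    · exact congrArg List.sum (List.map_congr_left fun r _ => h i r le_rfl)
    · exact ih fun k r hk => h k r (by omega)

lemma sum_map_addrsF_le {i : ℕ} {f g : List ℕ → ℕ} (h : ∀ k r, i ≤ k → f (k :: r) ≤ g (k :: r)) :
    ((addrsF i cs).map f).sum ≤ ((addrsF i cs).map g).sum :=
  List.sum_le_sum fun p hp => by
    obtain ⟨k, r, hk, rfl⟩ := exists_eq_cons_of_mem_addrsF hp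
    exact h k r hk

end Forest

section Gluing

variable (U V : List RTree)

-- The gluing pair `x = 1 1 0 u 0 v`, `y = 1 0 1 u 0 v`, with `U`, `V` the forests encoded by
-- `u`, `v`.
def gluingX : RTree := node (node (node [] :: U) :: V)

def gluingY : RTree := node (node [] :: node U :: V)

lemma addrs_gluingX :
    addrs (gluingX U V) = [] :: [0] :: [0, 0] :: ((addrsF 1 U).map (0 :: ·) ++ addrsF 1 V) := by
  simp [gluingX, addrs, addrsF]

lemma addrs_gluingY :
    addrs (gluingY U V) = [] :: [0] :: [1] :: ((addrsF 0 U).map (1 :: ·) ++ addrsF 2 V) := by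
  simp [gluingY, addrs, addrsF]

lemma potential_gluingX (p : List ℕ) :
    potential (gluingX U V) p = adist p [] + adist p [0] + adist p [0, 0] +
      ((addrsF 1 U).map fun a => adist p (0 :: a)).sum + ((addrsF 1 V).map (adist p)).sum := by
  simp [potential, addrs_gluingX, Function.comp_def, add_assoc]

lemma potential_gluingY (q : List ℕ) :
    potential (gluingY U V) q = adist q [] + adist q [0] + adist q [1] +
      ((addrsF 0 U).map fun a => adist q (1 :: a)).sum + ((addrsF 2 V).map (adist q)).sum := by
  simp [potential, addrs_gluingY, Function.comp_def, add_assoc]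

variable {U V}

lemma mem_addrs_gluingX {p : List ℕ} :
    p ∈ addrs (gluingX U V) ↔ p = [] ∨ p = [0] ∨ p = [0, 0] ∨
      (∃ k r, k :: r ∈ addrsF 0 U ∧ p = 0 :: (k + 1) :: r) ∨
      ∃ k r, k :: r ∈ addrsF 0 V ∧ p = (k + 1) :: r := by
  simp only [addrs_gluingX, List.mem_cons, List.mem_append, List.mem_map, mem_addrsF_iff (i := 1)]
  grind

lemma mem_addrs_gluingY {q : List ℕ} :
    q ∈ addrs (gluingY U V) ↔ q = [] ∨ q = [0] ∨ q = [1] ∨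
      (∃ k r, k :: r ∈ addrsF 0 U ∧ q = 1 :: k :: r) ∨
      ∃ k r, k :: r ∈ addrsF 0 V ∧ q = (k + 2) :: r := by
  simp only [addrs_gluingY, List.mem_cons, List.mem_append, List.mem_map, mem_addrsF_iff (i := 2)]
  refine or_congr_right <| or_congr_right <| or_congr_right <| or_congr_left ⟨?_, ?_⟩
  · rintro ⟨a, ha, rfl⟩
    obtain ⟨k, r, -, rfl⟩ := exists_eq_cons_of_mem_addrsF ha
    exact ⟨k, r, ha, rfl⟩
  · rintro ⟨k, r, h, rfl⟩
    exact ⟨_, h, rfl⟩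

variable (U V)

lemma potential_gluingY_add_eq {p q : List ℕ}
    (hU : ∀ k r, adist q (1 :: k :: r) = adist p (0 :: (k + 1) :: r))
    (hV : ∀ k r, adist q ((k + 2) :: r) = adist p ((k + 1) :: r)) :
    potential (gluingY U V) q + (adist p [] + adist p [0] + adist p [0, 0]) =
      potential (gluingX U V) p + (adist q [] + adist q [0] + adist q [1]) := by
  have hUsum : ((addrsF 1 U).map fun a => adist p (0 :: a)).sum =
      ((addrsF 0 U).map fun a => adist q (1 :: a)).sum :=
    sum_map_addrsF_succ fun k r _ => (hU k r).symm
  have hVsum : ((addrsF 2 V).map (adist q)).sum = ((addrsF 1 V).map (adist p)).sum :=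
    sum_map_addrsF_succ fun k r hk => by
      obtain ⟨k, rfl⟩ := Nat.exists_eq_add_of_le' hk
      exact hV k r
  rw [potential_gluingX, potential_gluingY, hUsum, hVsum]
  ring

lemma potential_gluingY_nil_add_one :
    potential (gluingY U V) [] + 1 = potential (gluingX U V) [] := by
  simpa using potential_gluingY_add_eq U V (p := []) (q := []) (by simp) (by simp)

lemma potential_gluingY_one :
    potential (gluingY U V) [1] = potential (gluingX U V) [0] + 1 := by
  simpa using potential_gluingY_add_eq U V (p := [0]) (q := [1]) (by simp) (by simp)

lemma potential_gluingY_left (k : ℕ) (r : List ℕ) :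
    potential (gluingY U V) (1 :: k :: r) = potential (gluingX U V) (0 :: (k + 1) :: r) + 1 := by
  have := potential_gluingY_add_eq U V (p := 0 :: (k + 1) :: r) (q := 1 :: k :: r)
    (by simp) (by simp)
  simp only [adist_nil_right, adist_cons_cons, List.length_cons, List.length_nil, ↓reduceIte,
    Nat.add_eq_zero_iff, one_ne_zero, and_false] at this
  omega

lemma potential_gluingY_right (j : ℕ) (s : List ℕ) :
    potential (gluingY U V) ((j + 2) :: s) + 1 = potential (gluingX U V) ((j + 1) :: s) := by
  have := potential_gluingY_add_eq U V (p := (j + 1) :: s) (q := (j + 2) :: s)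
    (by simp) (by simp)
  simp only [adist_nil_right, adist_cons_cons, List.length_cons, List.length_nil, ↓reduceIte,
    Nat.add_eq_zero_iff, one_ne_zero, OfNat.ofNat_ne_zero, and_false, Nat.reduceEqDiff] at this
  omega

lemma potential_gluingX_zero_le_leaf :
    potential (gluingX U V) [0] ≤ potential (gluingX U V) [0, 0] := by
  have hU : ((addrsF 1 U).map fun a => adist [0] (0 :: a)).sum ≤
      ((addrsF 1 U).map fun a => adist [0, 0] (0 :: a)).sum :=
    sum_map_addrsF_le fun k r hk => by
      obtain ⟨k, rfl⟩ := Nat.exists_eq_add_of_le' hk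
      simp
  have hV : ((addrsF 1 V).map (adist [0])).sum ≤ ((addrsF 1 V).map (adist [0, 0])).sum :=
    sum_map_addrsF_le fun k r hk => by
      obtain ⟨k, rfl⟩ := Nat.exists_eq_add_of_le' hk
      simp
  have hspecial : adist [0] [] + adist [0] [0] + adist [0] [0, 0] ≤
      adist [0, 0] [] + adist [0, 0] [0] + adist [0, 0] [0, 0] := by decide
  rw [potential_gluingX, potential_gluingX]
  omega

lemma potential_gluingY_nil_le_leaf :
    potential (gluingY U V) [] ≤ potential (gluingY U V) [0] := by
  have hU : ((addrsF 0 U).map fun a => adist [] (1 :: a)).sum ≤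
      ((addrsF 0 U).map fun a => adist [0] (1 :: a)).sum :=
    sum_map_addrsF_le fun k r _ => by simp
  have hV : ((addrsF 2 V).map (adist [])).sum ≤ ((addrsF 2 V).map (adist [0])).sum :=
    sum_map_addrsF_le fun k r hk => by
      obtain ⟨k, rfl⟩ := Nat.exists_eq_add_of_le' hk
      simp
  have hspecial : adist [] [] + adist [] [0] + adist [] [1] ≤
      adist [0] [] + adist [0] [0] + adist [0] [1] := by decide
  rw [potential_gluingY, potential_gluingY]
  omega

variable {U V}

lemma phiMin_gluingX_le : phiMin (gluingX U V) ≤ phiMin (gluingY U V) + 1 := by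
  refine phiMin_le_phiMin_add fun q hq => ?_
  rcases mem_addrs_gluingY.mp hq with rfl | rfl | rfl | ⟨k, r, h, rfl⟩ | ⟨k, r, h, rfl⟩
  · exact ⟨[], mem_addrs_gluingX.mpr (by simp), by linarith [potential_gluingY_nil_add_one U V]⟩
  · exact ⟨[], mem_addrs_gluingX.mpr (by simp), by
      linarith [potential_gluingY_nil_add_one U V, potential_gluingY_nil_le_leaf U V]⟩
  · exact ⟨[0], mem_addrs_gluingX.mpr (by simp), by linarith [potential_gluingY_one U V]⟩
  · exact ⟨0 :: (k + 1) :: r, mem_addrs_gluingX.mpr (by simp [h]),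
      by linarith [potential_gluingY_left U V k r]⟩
  · exact ⟨(k + 1) :: r, mem_addrs_gluingX.mpr (by simp [h]),
      (potential_gluingY_right U V k r).ge⟩

lemma phiMin_gluingY_le : phiMin (gluingY U V) ≤ phiMin (gluingX U V) + 1 := by
  refine phiMin_le_phiMin_add fun p hp => ?_
  rcases mem_addrs_gluingX.mp hp with rfl | rfl | rfl | ⟨k, r, h, rfl⟩ | ⟨k, r, h, rfl⟩
  · exact ⟨[], mem_addrs_gluingY.mpr (by simp), by linarith [potential_gluingY_nil_add_one U V]⟩
  · exact ⟨[1], mem_addrs_gluingY.mpr (by simp), (potential_gluingY_one U V).le⟩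
  · exact ⟨[1], mem_addrs_gluingY.mpr (by simp), by
      linarith [potential_gluingY_one U V, potential_gluingX_zero_le_leaf U V]⟩
  · exact ⟨1 :: k :: r, mem_addrs_gluingY.mpr (by simp [h]), (potential_gluingY_left U V k r).le⟩
  · exact ⟨(k + 2) :: r, mem_addrs_gluingY.mpr (by simp [h]),
      by linarith [potential_gluingY_right U V k r]⟩

lemma isCentroid_gluingY_of_isCentroid_gluingX {j : ℕ} {r : List ℕ}
    (h : IsCentroid (gluingX U V) ((j + 1) :: r)) :
    IsCentroid (gluingY U V) ((j + 2) :: r) ∧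
      phiMin (gluingY U V) + 1 = phiMin (gluingX U V) := by
  obtain ⟨hmem, hpot⟩ := h
  have hmemY : (j + 2) :: r ∈ addrs (gluingY U V) := by
    rcases mem_addrs_gluingX.mp hmem with h | h | h | ⟨k, s, -, h⟩ | ⟨k, s, hks, h⟩ <;>
      simp_all [mem_addrs_gluingY]
  have := potential_gluingY_right U V j r
  have := phiMin_le hmemY
  have := phiMin_gluingX_le (U := U) (V := V)
  exact ⟨⟨hmemY, by omega⟩, by omega⟩

lemma isCentroid_gluingX_of_isCentroid_gluingY {k : ℕ} {r : List ℕ}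
    (h : IsCentroid (gluingY U V) (1 :: k :: r)) :
    IsCentroid (gluingX U V) (0 :: (k + 1) :: r) ∧
      phiMin (gluingY U V) = phiMin (gluingX U V) + 1 := by
  obtain ⟨hmem, hpot⟩ := h
  have hmemX : 0 :: (k + 1) :: r ∈ addrs (gluingX U V) := by
    rcases mem_addrs_gluingY.mp hmem with h | h | h | ⟨k', s, hks, h⟩ | ⟨k', s, -, h⟩ <;>
      simp_all [mem_addrs_gluingX]
  have := potential_gluingY_left U V k r
  have := phiMin_le hmemX
  have := phiMin_gluingY_le (U := U) (V := V)
  exact ⟨⟨hmemX, by omega⟩, by omega⟩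

end Gluing

end RTree

open RTree in
/-- Let `(x,y)` be a gluing pair: in tree form, for forests `U, V`
(encoding the Dyck words `u, v`), `x = 1 1 0 u 0 v` is the tree whose root has a leftmost
child `a` having a leaf as leftmost child and the forest `U` as remaining subtrees, and
whose remaining subtrees are the forest `V`; `y = 1 0 1 u 0 v` is obtained by pulling that
leaf to the root.  (We require `x` to have `n ≥ 4` edges and `(x,y) ≠ (s_n, s_n')`, i.e.
not both `V = []` and all trees of `U` single vertices.)
If `x` has a centroid in its right subtree `v` (an address `(1+j) :: r`), then the
corresponding vertex `(2+j) :: r` is a centroid of `y` and `φ(y) = φ(x) − 1`.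
Symmetrically, if `y` has a centroid in its left subtree `u` (an address `1 :: k :: r`),
then the corresponding vertex `0 :: (k+1) :: r` is a centroid of `x` and `φ(y) = φ(x)+1`. -/
theorem gluing_pair_potential (U V : List RTree)
    (hn : 4 ≤ (RTree.node (RTree.node (RTree.node [] :: U) :: V)).edges)
    (hsn : ¬ (V = [] ∧ ∀ c ∈ U, c = RTree.node [])) :
    (∀ j r, IsCentroid (RTree.node (RTree.node (RTree.node [] :: U) :: V)) ((1 + j) :: r) →
      IsCentroid (RTree.node (RTree.node [] :: RTree.node U :: V)) ((2 + j) :: r) ∧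
      phiMin (RTree.node (RTree.node [] :: RTree.node U :: V)) + 1 =
        phiMin (RTree.node (RTree.node (RTree.node [] :: U) :: V))) ∧
    (∀ k r, IsCentroid (RTree.node (RTree.node [] :: RTree.node U :: V)) (1 :: k :: r) →
      IsCentroid (RTree.node (RTree.node (RTree.node [] :: U) :: V)) (0 :: (k + 1) :: r) ∧
      phiMin (RTree.node (RTree.node [] :: RTree.node U :: V)) =
        phiMin (RTree.node (RTree.node (RTree.node [] :: U) :: V)) + 1) := by
  refine ⟨fun j r h => ?_, fun k r h => isCentroid_gluingX_of_isCentroid_gluingY h⟩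
  rw [add_comm 1 j] at h
  rw [add_comm 2 j]
  exact isCentroid_gluingY_of_isCentroid_gluingX h
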